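/- arXiv:2604.03168 — 3 statements merged into one kernel-verified Lean document; each statement's English description precedes it below -/
import Mathlib

section
/- Let P be a set of polynomials over F₂ in variables x₁,…,xₙ, let f = I·x_c + U ∈ P be written in canonical form, and define Q₀ = (P ∖ {f}) ∪ {I, U} and Q₁ = the set obtained from (P ∖ {f}) ∪ {I+1} by substituting x_c = U in every polynomial, together with the polynomial x_c + U. Then Zero(P) = Zero(Q₀) ∪ Zero(Q₁) and Zero(Q₀) ∩ Zero(Q₁) = ∅. -/
open MvPolynomial

lemma zmod2_ne_zero (a : ZMod 2) (h : a ≠ 0) : a = 1 := by revert h; revert a; decide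

theorem stmt_5 (n : ℕ) (c : Fin n) (P : Set (MvPolynomial (Fin n) (ZMod 2)))
    (f I U : MvPolynomial (Fin n) (ZMod 2)) (hfP : f ∈ P)
    (hI : c ∉ I.vars) (hU : c ∉ U.vars) (hf : f = I * X c + U)
    (sub : MvPolynomial (Fin n) (ZMod 2) → MvPolynomial (Fin n) (ZMod 2))
    (hsub : sub = fun g => bind₁ (Function.update X c U) g)
    (Q0 Q1 : Set (MvPolynomial (Fin n) (ZMod 2)))
    (hQ0 : Q0 = (P \ {f}) ∪ {I, U})
    (hQ1 : Q1 = (sub '' ((P \ {f}) ∪ {I + 1})) ∪ {X c + U})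
    (Z : Set (MvPolynomial (Fin n) (ZMod 2)) → Set (Fin n → ZMod 2))
    (hZ : Z = fun S => {x | ∀ g ∈ S, eval x g = 0}) :
    Z P = Z Q0 ∪ Z Q1 ∧ Z Q0 ∩ Z Q1 = ∅ := by
  subst hZ hQ0 hQ1 hsub hf
  -- key: if x c = eval x U then eval x (sub g) = eval x g
  have key : ∀ (x : Fin n → ZMod 2), x c = eval x U →
      ∀ g, eval x (bind₁ (Function.update X c U) g) = eval x g := by
    intro x hx g
    have h1 : eval x (bind₁ (Function.update X c U) g)
        = eval (fun i => eval x (Function.update X c U i)) g :=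
      eval₂Hom_bind₁ _ _ _ _
    have h2 : (fun i => eval x (Function.update X c U i)) = x := by
      funext i
      by_cases h : i = c
      · subst h; simp [Function.update_self, hx]
      · simp [Function.update_of_ne h]
    rw [h1, h2]
  constructor
  · ext x
    simp only [Set.mem_setOf_eq, Set.mem_union]
    constructor
    · intro hx
      have hfx := hx _ hfP
      simp only [map_add, map_mul, eval_X] at hfx
      by_cases hIx : eval x I = 0
      · left
        intro g hg
        rcases hg with hg | hg
        · exact hx _ hg.1
        · rcases hg with hg | hg
          · subst hg; exact hIx
          · simp only [Set.mem_singleton_iff] at hg; subst hg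
            rw [hIx, zero_mul, zero_add] at hfx; exact hfx
      · right
        have hI1 := zmod2_ne_zero _ hIx
        rw [hI1, one_mul] at hfx
        have hxc : x c = eval x U := by
          have : x c + eval x U + eval x U = eval x U := by rw [hfx]; ring
          rwa [add_assoc, CharTwo.add_self_eq_zero, add_zero] at this
        intro g hg
        rcases hg with ⟨g', hg', rfl⟩ | hg
        · rw [key x hxc]
          rcases hg' with hg' | hg'
          · exact hx _ hg'.1
          · simp only [Set.mem_singleton_iff] at hg'; subst hg'
            simp [hI1, CharTwo.add_self_eq_zero]
        · simp only [Set.mem_singleton_iff] at hg; subst hg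
          simp [hxc, CharTwo.add_self_eq_zero]
    · intro hx g hg
      rcases hx with hx | hx
      · by_cases hgf : g = I * X c + U
        · subst hgf
          have h1 : eval x I = 0 := hx I (Or.inr (Or.inl rfl))
          have h2 : eval x U = 0 := hx U (Or.inr (Or.inr rfl))
          simp [h1, h2]
        · exact hx g (Or.inl ⟨hg, hgf⟩)
      · have hXcU : eval x (X c + U) = 0 := hx _ (Or.inr rfl)
        simp only [map_add, eval_X] at hXcU
        have hxc : x c = eval x U := by
          have : x c + eval x U + eval x U = 0 + eval x U := by rw [hXcU]
          rwa [add_assoc, CharTwo.add_self_eq_zero, add_zero, zero_add] at this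
        have hI1 : eval x (I + 1) = 0 := by
          rw [← key x hxc]
          exact hx _ (Or.inl ⟨I + 1, Or.inr rfl, rfl⟩)
        simp only [map_add, map_one] at hI1
        have hIx : eval x I = 1 := by
          have : eval x I + 1 + 1 = 0 + 1 := by rw [hI1]
          rwa [add_assoc, CharTwo.add_self_eq_zero, add_zero, zero_add] at this
        by_cases hgf : g = I * X c + U
        · subst hgf
          simp [hIx, hxc, CharTwo.add_self_eq_zero]
        · rw [← key x hxc]
          exact hx _ (Or.inl ⟨g, Or.inl ⟨hg, hgf⟩, rfl⟩)
  · ext x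
    simp only [Set.mem_inter_iff, Set.mem_setOf_eq, Set.mem_empty_iff_false, iff_false]
    rintro ⟨h0, h1⟩
    have hIx : eval x I = 0 := h0 I (Or.inr (Or.inl rfl))
    have hXcU : eval x (X c + U) = 0 := h1 _ (Or.inr rfl)
    simp only [map_add, eval_X] at hXcU
    have hxc : x c = eval x U := by
      have : x c + eval x U + eval x U = 0 + eval x U := by rw [hXcU]
      rwa [add_assoc, CharTwo.add_self_eq_zero, add_zero, zero_add] at this
    have hI1 : eval x (I + 1) = 0 := by
      rw [← key x hxc]
      exact h1 _ (Or.inl ⟨I + 1, Or.inr rfl, rfl⟩)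
    simp [hIx] at hI1
end

section
/- Let P be a set of polynomials over F₂ in variables (x, ζ), x ∈ F₂ⁿ, ζ ∈ F₂^v, and suppose Zero(P) = ⋃_{i=1}^{s} Zero(T_i) where the T_i are characteristic sets with Proj_x(Zero(T_i)) ∩ Proj_x(Zero(T_j)) = ∅ for all i ≠ j. Say T_i is admissible if it consists of the polynomials x_{n+1}, …, x_{n+v} together with polynomials involving only x-variables. Then ⋃_{T_i admissible} Proj_x(Zero(T_i)) ⊆ S, where S = {x* : (x*,0) ∈ Zero(P) and (x*,ζ) ∉ Zero(P) for all ζ ≠ 0}. -/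
open MvPolynomial

/-- A monic characteristic set over F₂ in `N` variables: polynomials `x_{c i} + U i`
with strictly increasing leading indices, each `U i` involving only free variables. -/
structure CharSet (N : ℕ) where
  m : ℕ
  c : Fin m → Fin N
  U : Fin m → MvPolynomial (Fin N) (ZMod 2)
  mono : StrictMono c
  free : ∀ i, ∀ k ∈ (U i).vars, k ∉ Set.range c

/-- The common zero set of a characteristic set. -/
def CharSet.zero {N : ℕ} (T : CharSet N) : Set (Fin N → ZMod 2) :=
  {y | ∀ i, y (T.c i) + MvPolynomial.eval y (T.U i) = 0}

/-- The common zero set of a set of polynomials. -/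
def zeroSet {N : ℕ} (P : Set (MvPolynomial (Fin N) (ZMod 2))) : Set (Fin N → ZMod 2) :=
  {y | ∀ g ∈ P, MvPolynomial.eval y g = 0}

/-- Projection onto the x-coordinates. -/
def projX (n v : ℕ) (Z : Set (Fin (n + v) → ZMod 2)) : Set (Fin n → ZMod 2) :=
  {x | ∃ ζ : Fin v → ZMod 2, Fin.append x ζ ∈ Z}

/-- `T` is admissible: it contains the polynomials `x_{n+1}, …, x_{n+v}` themselves,
and its remaining polynomials involve only x-variables. -/
def Admissible (n v : ℕ) (T : CharSet (n + v)) : Prop :=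
  (∀ j : Fin (n + v), n ≤ (j : ℕ) → ∃ i, T.c i = j) ∧
  (∀ i, n ≤ (T.c i : ℕ) → T.U i = 0) ∧
  (∀ i, (T.c i : ℕ) < n → ∀ k ∈ (T.U i).vars, (k : ℕ) < n)

theorem stmt_10 (n v s : ℕ) (hv : 1 ≤ v)
    (P : Set (MvPolynomial (Fin (n + v)) (ZMod 2)))
    (T : Fin s → CharSet (n + v))
    (hdec : zeroSet P = ⋃ i, (T i).zero)
    (hdisj : ∀ i j, i ≠ j → projX n v ((T i).zero) ∩ projX n v ((T j).zero) = ∅) :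
    (⋃ i ∈ {i : Fin s | Admissible n v (T i)}, projX n v ((T i).zero)) ⊆
      {x : Fin n → ZMod 2 | Fin.append x 0 ∈ zeroSet P ∧
        ∀ ζ : Fin v → ZMod 2, ζ ≠ 0 → Fin.append x ζ ∉ zeroSet P} := by
  intro x hx
  simp only [Set.mem_iUnion, Set.mem_setOf_eq] at hx
  obtain ⟨i, hi, ζ, hζ⟩ := hx
  have key : ∀ (ζ' : Fin v → ZMod 2), Fin.append x ζ' ∈ (T i).zero → ζ' = 0 := by
    intro ζ' hz
    funext k
    obtain ⟨i', hi'⟩ := hi.1 (Fin.natAdd n k) (Nat.le_add_right n k)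
    have h0 := hz i'
    rw [hi.2.1 i' (by rw [hi']; exact Nat.le_add_right n k)] at h0
    rw [map_zero, add_zero, hi'] at h0
    simpa [Fin.append_right] using h0
  have hζ0 := key ζ hζ
  subst hζ0
  have hzero : Fin.append x 0 ∈ zeroSet P := by
    rw [hdec]; exact Set.mem_iUnion.mpr ⟨i, hζ⟩
  refine ⟨hzero, ?_⟩
  intro ζ' hne hmem
  rw [hdec] at hmem
  obtain ⟨j, hj⟩ := Set.mem_iUnion.mp hmem
  by_cases hij : j = i
  · subst hij; exact hne (key ζ' hj)
  · have hx2 : x ∈ projX n v ((T i).zero) ∩ projX n v ((T j).zero) :=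
      ⟨⟨0, hζ⟩, ⟨ζ', hj⟩⟩
    rw [hdisj i j (Ne.symm hij)] at hx2
    exact hx2
end

section
/- Over F₂, with c₁ = (1,0)ᵀ, c₂ = (x₁+x₂, x₂+x₃)ᵀ, c₃ = (1,1)ᵀ, c₄ = (x₄+x₅, x₅+x₆)ᵀ, c₅ = (0,1)ᵀ, a point x ∈ F₂⁶ satisfies rank[c_{i₁}, c_{i₂}, c_{i₃}] = 2 for all 1 ≤ i₁ < i₂ < i₃ ≤ 5 if and only if x lies in the union of the zero sets of the three triangular systems T₁ = {x₂+x₁+1, x₃+x₁+1, x₆+x₅+1}, T₂ = {x₂+x₁, x₃+x₁+1, x₅+x₄+1}, T₃ = {x₂+x₁+1, x₃+x₁, x₆+x₄+1}. Moreover, these three zero sets are pairwise disjoint and the union has exactly 24 elements. -/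
/-- The five column vectors `c₁,…,c₅` (indexed from 0), as functions of
`x = (x₁,…,x₆) ∈ F₂⁶` (indexed from 0). -/
def col (x : Fin 6 → ZMod 2) : Fin 5 → (Fin 2 → ZMod 2) :=
  ![![1, 0], ![x 0 + x 1, x 1 + x 2], ![1, 1], ![x 3 + x 4, x 4 + x 5], ![0, 1]]

/-- The zero set of the triangular system `T₁ = {x₂+x₁+1, x₃+x₁+1, x₆+x₅+1}`. -/
def Z1 : Set (Fin 6 → ZMod 2) :=
  {x | x 1 + x 0 + 1 = 0 ∧ x 2 + x 0 + 1 = 0 ∧ x 5 + x 4 + 1 = 0}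

/-- The zero set of the triangular system `T₂ = {x₂+x₁, x₃+x₁+1, x₅+x₄+1}`. -/
def Z2 : Set (Fin 6 → ZMod 2) :=
  {x | x 1 + x 0 = 0 ∧ x 2 + x 0 + 1 = 0 ∧ x 4 + x 3 + 1 = 0}

/-- The zero set of the triangular system `T₃ = {x₂+x₁+1, x₃+x₁, x₆+x₄+1}`. -/
def Z3 : Set (Fin 6 → ZMod 2) :=
  {x | x 1 + x 0 + 1 = 0 ∧ x 2 + x 0 = 0 ∧ x 5 + x 3 + 1 = 0}

lemma rank_two_iff (A : Matrix (Fin 2) (Fin 3) (ZMod 2)) :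
    A.rank = 2 ↔ ∀ y : Fin 2 → ZMod 2, ∃ v : Fin 3 → ZMod 2, A.mulVec v = y := by
  have hfr : Module.finrank (ZMod 2) (Fin 2 → ZMod 2) = 2 := by
    simp [Module.finrank_pi]
  have h : A.rank = 2 ↔ LinearMap.range A.mulVecLin = ⊤ := by
    rw [Matrix.rank]
    constructor
    · intro h
      exact Submodule.eq_top_of_finrank_eq (by rw [h, hfr])
    · intro h
      rw [h, finrank_top, hfr]
  rw [h, LinearMap.range_eq_top]
  simp only [Function.Surjective, Matrix.mulVecLin_apply]

instance : DecidablePred (· ∈ Z1 ∪ Z2 ∪ Z3) := fun x =>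
  decidable_of_iff ((x 1 + x 0 + 1 = 0 ∧ x 2 + x 0 + 1 = 0 ∧ x 5 + x 4 + 1 = 0) ∨
    (x 1 + x 0 = 0 ∧ x 2 + x 0 + 1 = 0 ∧ x 4 + x 3 + 1 = 0) ∨
    (x 1 + x 0 + 1 = 0 ∧ x 2 + x 0 = 0 ∧ x 5 + x 3 + 1 = 0)) (by
      simp only [Z1, Z2, Z3, Set.mem_union, Set.mem_setOf_eq]; tauto)

set_option maxRecDepth 100000 in
set_option maxHeartbeats 2000000 in
theorem stmt_18 :
    (∀ x : Fin 6 → ZMod 2,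
      (∀ i₁ i₂ i₃ : Fin 5, i₁ < i₂ → i₂ < i₃ →
        (Matrix.of (fun (r : Fin 2) (j : Fin 3) => col x (![i₁, i₂, i₃] j) r) :
          Matrix (Fin 2) (Fin 3) (ZMod 2)).rank = 2) ↔ x ∈ Z1 ∪ Z2 ∪ Z3) ∧
    Z1 ∩ Z2 = ∅ ∧ Z1 ∩ Z3 = ∅ ∧ Z2 ∩ Z3 = ∅ ∧
    Nat.card ↥(Z1 ∪ Z2 ∪ Z3) = 24 := by
  refine ⟨?_, ?_, ?_, ?_, ?_⟩
  · intro x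
    simp only [rank_two_iff, Z1, Z2, Z3, Set.mem_union, Set.mem_setOf_eq]
    revert x
    decide
  · rw [Set.eq_empty_iff_forall_notMem]
    intro x
    simp only [Z1, Z2, Set.mem_inter_iff, Set.mem_setOf_eq]
    revert x
    decide
  · rw [Set.eq_empty_iff_forall_notMem]
    intro x
    simp only [Z1, Z3, Set.mem_inter_iff, Set.mem_setOf_eq]
    revert x
    decide
  · rw [Set.eq_empty_iff_forall_notMem]
    intro x
    simp only [Z2, Z3, Set.mem_inter_iff, Set.mem_setOf_eq]
    revert x
    decide
  · rw [Nat.card_eq_fintype_card]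
    decide
end
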